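/- There exists a real number u with 0 < u < 3/20 satisfying 175u³ − 49u² − 7u + 1 = 0, and there exist 15 unit vectors x_1, …, x_15 in EuclideanSpace ℝ (Fin 7) such that ⟨x_i, x_j⟩ ≤ u for all i ≠ j. -/

import Mathlib

open scoped InnerProductSpace

/-!
Fix a unit vector `p` and, in the hyperplane `p⊥`, the seven vertices `vᵢ` of a regular simplex,
so `⟪vᵢ, vⱼ⟫ = -1/6` for `i ≠ j`. The code consists of `p` and two rings of seven points,
`aᵢ = α vᵢ + β p` and `bᵢ = -γ vᵢ + u p` with `γ = √(1 - u²)`. Taking `α² = 6(1 - u)/7`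
makes the `aᵢ` pairwise at inner product exactly `u`; asking also `⟪aᵢ, bⱼ⟫ = u` for `i ≠ j` is possible precisely when
`175u³ - 49u² - 7u + 1 = 0`, and all other inner products are then below `u`.
-/

def IsSphericalCode {E ι : Type*} [NormedAddCommGroup E] [InnerProductSpace ℝ E]
    (x : ι → E) (u : ℝ) : Prop :=
  (∀ i, ‖x i‖ = 1) ∧ Pairwise fun i j => ⟪x i, x j⟫_ℝ ≤ u

lemma IsSphericalCode.comp_injective {E ι κ : Type*} [NormedAddCommGroup E]
    [InnerProductSpace ℝ E] {x : ι → E} {u : ℝ} (hx : IsSphericalCode x u) {f : κ → ι}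
    (hf : f.Injective) : IsSphericalCode (x ∘ f) u :=
  ⟨fun k => hx.1 (f k), hx.2.comp_of_injective hf⟩

section PolarFrame

variable {E ι : Type*} [NormedAddCommGroup E] [InnerProductSpace ℝ E]

structure IsPolarFrame [DecidableEq ι] (p : E) (v : ι → E) (t : ℝ) : Prop where
  norm_pole : ‖p‖ = 1
  inner_vertex_pole : ∀ i, ⟪v i, p⟫_ℝ = 0
  inner_vertex_vertex : ∀ i j, ⟪v i, v j⟫_ℝ = if i = j then 1 else -t

def poleAndTwoRings (p : E) (v : ι → E) (a b c d : ℝ) : Option (ι ⊕ ι) → E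
  | none => p
  | some (.inl i) => a • v i + b • p
  | some (.inr i) => c • v i + d • p

namespace IsPolarFrame

variable [DecidableEq ι] {p : E} {v : ι → E}

section

variable {t : ℝ} (hF : IsPolarFrame p v t)
include hF

lemma inner_pole_pole : ⟪p, p⟫_ℝ = 1 := by
  rw [real_inner_self_eq_norm_sq, hF.norm_pole, one_pow]

lemma inner_pole_ring (a b : ℝ) (i : ι) : ⟪p, a • v i + b • p⟫_ℝ = b := by
  rw [inner_add_right, real_inner_smul_right, real_inner_smul_right, real_inner_comm,
    hF.inner_vertex_pole, hF.inner_pole_pole]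
  ring

lemma inner_ring_ring (a b c d : ℝ) (i j : ι) :
    ⟪a • v i + b • p, c • v j + d • p⟫_ℝ = a * c * (if i = j then 1 else -t) + b * d := by
  simp only [inner_add_left, inner_add_right, real_inner_smul_left, real_inner_smul_right,
    hF.inner_vertex_vertex, hF.inner_vertex_pole, real_inner_comm _ p, hF.inner_pole_pole]
  ring

lemma isSphericalCode_poleAndTwoRings {a b c d u : ℝ} (hab : a ^ 2 + b ^ 2 = 1)
    (hcd : c ^ 2 + d ^ 2 = 1) (hb : b ≤ u) (hd : d ≤ u) (haa : -t * a ^ 2 + b ^ 2 ≤ u)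
    (hcc : -t * c ^ 2 + d ^ 2 ≤ u) (hac : a * c + b * d ≤ u)
    (hac' : -t * (a * c) + b * d ≤ u) :
    IsSphericalCode (poleAndTwoRings p v a b c d) u := by
  have hpole := hF.inner_pole_ring
  have hring := hF.inner_ring_ring
  refine ⟨?_, ?_⟩
  · rintro (_ | i | i)
    · exact hF.norm_pole
    · rw [norm_eq_sqrt_real_inner, poleAndTwoRings, hring, if_pos rfl, Real.sqrt_eq_one]
      linear_combination hab
    · rw [norm_eq_sqrt_real_inner, poleAndTwoRings, hring, if_pos rfl, Real.sqrt_eq_one]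
      linear_combination hcd
  · rintro (_ | i | i) (_ | j | j) hij
    · exact absurd rfl hij
    all_goals
      simp only [poleAndTwoRings, hpole, real_inner_comm p, hring]
      (try split_ifs with h) <;> first | linarith | (subst h; exact absurd rfl hij)

end

lemma isSphericalCode_of_cubic_root (hF : IsPolarFrame p v (1 / 6)) {u : ℝ} (hu₀ : 0 < u)
    (hu : u < 3 / 20) (hcubic : 175 * u ^ 3 - 49 * u ^ 2 - 7 * u + 1 = 0) :
    IsSphericalCode (poleAndTwoRings p v √(6 * (1 - u) / 7)
      (-(4 + 7 * u - 105 * u ^ 2) / (7 * (1 + u))) (-√(1 - u ^ 2)) u) u := by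
  set a := √(6 * (1 - u) / 7)
  set b := -(4 + 7 * u - 105 * u ^ 2) / (7 * (1 + u)) with hb_def
  set c := √(1 - u ^ 2)
  have ha : a ^ 2 = 6 * (1 - u) / 7 := Real.sq_sqrt (by linarith)
  have hc : c ^ 2 = 1 - u ^ 2 := Real.sq_sqrt (by nlinarith)
  have hb : b ^ 2 = (6 * u + 1) / 7 := by
    rw [hb_def, div_pow, div_eq_div_iff (by positivity) (by norm_num)]
    linear_combination (441 * u + 63) * hcubic
  have hb₀ : b ≤ 0 := div_nonpos_of_nonpos_of_nonneg (by nlinarith) (by linarith)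
  have hac : a * c = 6 * u * (1 - b) := by
    have h1b : 1 - b = (11 + 14 * u - 105 * u ^ 2) / (7 * (1 + u)) := by
      rw [hb_def]; field_simp; ring
    rw [← Real.sqrt_mul (by linarith), Real.sqrt_eq_iff_eq_sq (by nlinarith) (by nlinarith), h1b]
    field_simp
    linear_combination (7 + 56 * u - 5 * u ^ 2 - 378 * u ^ 3) * hcubic
  exact hF.isSphericalCode_poleAndTwoRings (by linear_combination ha + hb)
    (by linear_combination hc) (by linarith) le_rfl (by linear_combination (-1 / 6) * ha + hb)
    (by nlinarith) (by nlinarith) (by linear_combination (1 / 6) * hac)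

end IsPolarFrame

end PolarFrame

namespace EuclideanSpace

variable {ι : Type*} [Fintype ι]

noncomputable def allOnes : EuclideanSpace ℝ ι := WithLp.toLp 2 fun _ => 1

lemma inner_allOnes_allOnes :
    ⟪(allOnes : EuclideanSpace ℝ ι), allOnes⟫_ℝ = Fintype.card ι := by
  simp only [allOnes, PiLp.inner_apply]
  simp

lemma norm_allOnes : ‖(allOnes : EuclideanSpace ℝ ι)‖ = √(Fintype.card ι) := by
  rw [norm_eq_sqrt_real_inner, inner_allOnes_allOnes]

variable [DecidableEq ι]

lemma inner_single_one_allOnes (i : ι) :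
    ⟪single i (1 : ℝ), (allOnes : EuclideanSpace ℝ ι)⟫_ℝ = 1 := by
  simp [inner_single_left, allOnes]

lemma inner_single_one_single_one (i j : ι) :
    ⟪single i (1 : ℝ), (single j 1 : EuclideanSpace ℝ ι)⟫_ℝ = if i = j then 1 else 0 := by
  simp [inner_single_left, PiLp.single_apply]

lemma exists_isPolarFrame (hι : 2 ≤ Fintype.card ι) :
    ∃ (p : EuclideanSpace ℝ ι) (v : ι → EuclideanSpace ℝ ι),
      IsPolarFrame p v (1 / ((Fintype.card ι : ℝ) - 1)) := by
  set n : ℝ := (Fintype.card ι : ℝ) with hn_def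
  have hn : 2 ≤ n := by rw [hn_def]; exact_mod_cast hι
  have hs : ∀ i, ⟪n • single i (1 : ℝ) - allOnes, (allOnes : EuclideanSpace ℝ ι)⟫_ℝ = 0 := by
    intro i
    simp only [inner_sub_left, real_inner_smul_left, inner_single_one_allOnes,
      inner_allOnes_allOnes, ← hn_def]
    ring
  have hss : ∀ i j, ⟪n • single i (1 : ℝ) - allOnes,
      n • (single j 1 : EuclideanSpace ℝ ι) - allOnes⟫_ℝ = n * (n * if i = j then 1 else 0) - n := by
    intro i j
    simp only [inner_sub_left, inner_sub_right, real_inner_smul_left, real_inner_smul_right,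
      inner_single_one_allOnes, inner_allOnes_allOnes, inner_single_one_single_one,
      real_inner_comm _ allOnes, ← hn_def]
    ring
  refine ⟨(√n)⁻¹ • allOnes, fun i => (√(n * (n - 1)))⁻¹ • (n • single i 1 - allOnes), ?_, ?_, ?_⟩
  · rw [norm_smul, norm_allOnes, norm_inv, Real.norm_of_nonneg (Real.sqrt_nonneg _)]
    exact inv_mul_cancel₀ (by positivity)
  · intro i
    simp [real_inner_smul_left, real_inner_smul_right, hs]
  · intro i j
    have hsq : (√(n * (n - 1)))⁻¹ * (√(n * (n - 1)))⁻¹ = (n * (n - 1))⁻¹ := by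
      rw [← mul_inv, Real.mul_self_sqrt (by nlinarith)]
    have : n - 1 ≠ 0 := by linarith
    rw [real_inner_smul_left, real_inner_smul_right, hss, ← mul_assoc, hsq]
    split_ifs
    · field_simp
    · field_simp; ring

end EuclideanSpace

lemma exists_cubic_root_mem_Icc :
    ∃ u ∈ Set.Icc (9 / 100 : ℝ) (1 / 10), 175 * u ^ 3 - 49 * u ^ 2 - 7 * u + 1 = 0 := by
  have hcont : ContinuousOn (fun u : ℝ => 175 * u ^ 3 - 49 * u ^ 2 - 7 * u + 1)
      (Set.Icc (9 / 100) (1 / 10)) := by fun_prop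
  exact intermediate_value_Icc' (by norm_num) hcont (by norm_num)

/-- There exists `u` with `0 < u < 3/20` satisfying `175u³ - 49u² - 7u + 1 = 0`, and
15 unit vectors in `EuclideanSpace ℝ (Fin 7)` whose pairwise inner products are all
at most `u`. -/
theorem exists_spherical_code_15_points_dim7 :
    ∃ u : ℝ, 0 < u ∧ u < 3/20 ∧ 175*u^3 - 49*u^2 - 7*u + 1 = 0 ∧
      ∃ x : Fin 15 → EuclideanSpace ℝ (Fin 7),
        (∀ i, ‖x i‖ = 1) ∧ ∀ i j, i ≠ j → ⟪x i, x j⟫_ℝ ≤ u := by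
  obtain ⟨u, ⟨hu₁, hu₂⟩, hcubic⟩ := exists_cubic_root_mem_Icc
  obtain ⟨p, v, hF⟩ := EuclideanSpace.exists_isPolarFrame (ι := Fin 7) (by simp)
  rw [show (1 : ℝ) / ((Fintype.card (Fin 7) : ℝ) - 1) = 1 / 6 by norm_num] at hF
  have hcode := hF.isSphericalCode_of_cubic_root (by linarith) (by linarith) hcubic
  let e : Fin 15 ≃ Option (Fin 7 ⊕ Fin 7) := Fintype.equivOfCardEq (by simp)
  exact ⟨u, by linarith, by linarith, hcubic, _, hcode.comp_injective e.injective⟩
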